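/- Let H ~ Lognormal(0, σ²) with σ > 0, a > 0, b ∈ ℝ, and let V = b + a/H have CDF F and PDF f. Then the virtual valuation c(v) = v + F(v)/f(v) is strictly increasing on (b, ∞); i.e., the distribution of V is regular in the Myerson sense. -/

import Mathlib

open MeasureTheory Real Set Filter
open Topology

/-- Standard normal PDF. -/
noncomputable def stdPdf (z : ℝ) : ℝ := (Real.sqrt (2 * Real.pi))⁻¹ * Real.exp (-z ^ 2 / 2)

/-- Standard normal CDF. -/
noncomputable def stdCdf (z : ℝ) : ℝ := ∫ t in Set.Iic z, stdPdf t

/-- PDF of a Lognormal(0, σ²) random variable. -/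
noncomputable def lnPdf (σ h : ℝ) : ℝ :=
  (h * σ * Real.sqrt (2 * Real.pi))⁻¹ * Real.exp (-(Real.log h) ^ 2 / (2 * σ ^ 2))

/-- CDF of the valuation V = b + a/H, H ~ Lognormal(0, σ²). -/
noncomputable def Fval (σ a b v : ℝ) : ℝ := stdCdf (Real.log ((v - b) / a) / σ)

/-- PDF of the valuation V = b + a/H, via change of variables. -/
noncomputable def fval (σ a b v : ℝ) : ℝ := lnPdf σ (a / (v - b)) * (a / (v - b) ^ 2)

/-- Virtual valuation c(v) = v + F(v)/f(v). -/
noncomputable def cval (σ a b v : ℝ) : ℝ := v + Fval σ a b v / fval σ a b v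

lemma stdPdf_pos (z : ℝ) : 0 < stdPdf z := by
  apply mul_pos (inv_pos.2 (Real.sqrt_pos.2 (by positivity))) (Real.exp_pos _)

lemma stdPdf_eq (z : ℝ) : stdPdf z = (Real.sqrt (2 * Real.pi))⁻¹ * Real.exp (-(1/2) * z ^ 2) := by
  unfold stdPdf; ring_nf

lemma continuous_stdPdf : Continuous stdPdf := by
  unfold stdPdf
  exact continuous_const.mul ((continuous_neg.comp (continuous_pow 2)).div_const 2).rexp

lemma integrable_stdPdf : Integrable stdPdf := by
  have := (integrable_exp_neg_mul_sq (b := 1/2) (by norm_num)).const_mul (Real.sqrt (2 * Real.pi))⁻¹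
  refine this.congr ?_
  filter_upwards with x using by rw [stdPdf_eq]

lemma hasDerivAt_stdPdf (z : ℝ) : HasDerivAt stdPdf (-z * stdPdf z) z := by
  have h : HasDerivAt (fun t : ℝ => -t ^ 2 / 2) (-z) z := by
    have := ((hasDerivAt_pow 2 z).neg).div_const 2
    simpa using this.congr_deriv (by ring)
  exact ((h.exp).const_mul (Real.sqrt (2 * Real.pi))⁻¹).congr_deriv (by unfold stdPdf; ring)

lemma stdCdf_pos (z : ℝ) : 0 < stdCdf z := by
  rw [stdCdf, setIntegral_pos_iff_support_of_nonneg_ae]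
  · have : (Function.support stdPdf) = Set.univ := by
      ext x; simp [Function.support, (stdPdf_pos x).ne']
    rw [this]
    simpa using (by simp : (0:ℝ) < (volume (Iic z)).toReal ∨ volume (Iic z) = ⊤)
  · filter_upwards with x using (stdPdf_pos x).le
  · exact integrable_stdPdf.integrableOn

lemma hasDerivAt_stdCdf (z : ℝ) : HasDerivAt stdCdf (stdPdf z) z := by
  have key : ∀ x : ℝ, stdCdf x = stdCdf 0 + ∫ t in (0:ℝ)..x, stdPdf t := by
    intro x
    rw [← intervalIntegral.integral_Iic_sub_Iic integrable_stdPdf.integrableOn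
      integrable_stdPdf.integrableOn]
    unfold stdCdf; ring
  have h1 : HasDerivAt (fun u => ∫ t in (0:ℝ)..u, stdPdf t) (stdPdf z) z :=
    intervalIntegral.integral_hasDerivAt_right integrable_stdPdf.intervalIntegrable
      (continuous_stdPdf.aestronglyMeasurable.stronglyMeasurableAtFilter)
      continuous_stdPdf.continuousAt
  have := (h1.const_add (stdCdf 0))
  exact this.congr_of_eventuallyEq (by filter_upwards with x using (key x))

lemma integrable_mul_stdPdf : Integrable (fun t : ℝ => -t * stdPdf t) := by
  have := (integrable_mul_exp_neg_mul_sq (b := 1/2) (by norm_num)).const_mul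
    (-(Real.sqrt (2 * Real.pi))⁻¹)
  refine this.congr ?_
  filter_upwards with x
  rw [stdPdf_eq]; ring

lemma tendsto_stdPdf_atBot : Tendsto stdPdf atBot (𝓝 0) := by
  have h1 : Tendsto (fun t : ℝ => -t ^ 2 / 2) atBot atBot := by
    apply Tendsto.atBot_div_const (by norm_num)
    apply tendsto_neg_atTop_atBot.comp
    have := (tendsto_pow_atTop (two_ne_zero)).comp tendsto_neg_atBot_atTop (α := ℝ)
    refine this.congr fun x => by simp [neg_pow]
  have := (Real.tendsto_exp_atBot.comp h1).const_mul (Real.sqrt (2 * Real.pi))⁻¹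
  rw [mul_zero] at this
  exact this.congr fun x => by simp [stdPdf, Function.comp]

lemma integral_mul_stdPdf (z : ℝ) : ∫ t in Iic z, -t * stdPdf t = stdPdf z := by
  have := integral_Iic_of_hasDerivAt_of_tendsto' (a := z) (f := stdPdf)
    (f' := fun t => -t * stdPdf t) (m := 0)
    (fun x _ => hasDerivAt_stdPdf x) integrable_mul_stdPdf.integrableOn tendsto_stdPdf_atBot
  simpa using this

lemma mills {z : ℝ} (hz : z < 0) : -z * stdCdf z ≤ stdPdf z := by
  have h1 : -z * stdCdf z = ∫ t in Iic z, -z * stdPdf t := by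
    rw [stdCdf, integral_const_mul]
  rw [h1, ← integral_mul_stdPdf z]
  apply setIntegral_mono_on (integrable_stdPdf.integrableOn.const_mul _)
    integrable_mul_stdPdf.integrableOn measurableSet_Iic
  intro t ht
  exact mul_le_mul_of_nonneg_right (by simpa using ht.out) (stdPdf_pos t).le

lemma deriv_pos_aux {σ z : ℝ} (hσ : 0 < σ) :
    0 < 2 + (σ + z) * (stdCdf z / stdPdf z) := by
  have hφ := stdPdf_pos z
  have hΦ := stdCdf_pos z
  have hQ : 0 < stdCdf z / stdPdf z := div_pos hΦ hφ
  rcases le_or_gt 0 (σ + z) with h | h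
  · nlinarith
  · have hz : z < 0 := by linarith
    have hm := mills hz
    have hzQ : -z * (stdCdf z / stdPdf z) ≤ 1 := by
      rw [← mul_div_assoc, div_le_one hφ]; exact hm
    nlinarith [mul_pos hσ hQ]

lemma fval_eq {σ a b : ℝ} (hσ : 0 < σ) (ha : 0 < a) {v : ℝ} (hv : b < v) :
    fval σ a b v = stdPdf (Real.log ((v - b) / a) / σ) / (σ * (v - b)) := by
  have hvb : 0 < v - b := sub_pos.2 hv
  have hL : Real.log (a / (v - b)) = -(Real.log ((v - b) / a)) := by
    rw [← Real.log_inv, inv_div]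
  have h1 : -(Real.log (a/(v-b)))^2/(2*σ^2) = -(Real.log ((v-b)/a)/σ)^2/2 := by
    rw [hL]; ring
  unfold fval lnPdf stdPdf
  rw [h1]
  have h2 : Real.sqrt (2 * Real.pi) > 0 := Real.sqrt_pos.2 (by positivity)
  field_simp

lemma cval_eq {σ a b : ℝ} (hσ : 0 < σ) (ha : 0 < a) {v : ℝ} (hv : b < v) :
    cval σ a b v = v + σ * (v - b) *
      (stdCdf (Real.log ((v - b) / a) / σ) / stdPdf (Real.log ((v - b) / a) / σ)) := by
  have hvb : 0 < v - b := sub_pos.2 hv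
  rw [cval, Fval, fval_eq hσ ha hv]
  rw [div_div_eq_mul_div]
  ring

/-- The virtual valuation of V = b + a/H, H ~ Lognormal(0, σ²), is strictly
increasing on (b, ∞); i.e., the distribution of V is regular in the Myerson sense. -/
theorem valuation_regular (σ a b : ℝ) (hσ : 0 < σ) (ha : 0 < a) :
    StrictMonoOn (cval σ a b) (Set.Ioi b) := by
  set zf : ℝ → ℝ := fun v => Real.log ((v - b) / a) / σ with hzf
  set G : ℝ → ℝ := fun v => v + σ * (v - b) * (stdCdf (zf v) / stdPdf (zf v)) with hGdef
  have hderiv : ∀ v ∈ Ioi b, HasDerivAt G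
      (2 + (σ + zf v) * (stdCdf (zf v) / stdPdf (zf v))) v := by
    intro v hv
    have hvb : 0 < v - b := sub_pos.2 hv
    have hz : HasDerivAt zf (1 / (σ * (v - b))) v := by
      have h1 : HasDerivAt (fun v : ℝ => (v - b) / a) (1 / a) v := by
        simpa using ((hasDerivAt_id v).sub_const b).div_const a
      have h2 : HasDerivAt (fun v : ℝ => Real.log ((v - b) / a)) (((v - b) / a)⁻¹ * (1 / a)) v :=
        (Real.hasDerivAt_log (by positivity)).comp v h1
      have := h2.div_const σ
      refine this.congr_deriv ?_
      field_simp
    have hΦ : HasDerivAt (fun v => stdCdf (zf v)) (stdPdf (zf v) * (1 / (σ * (v - b)))) v :=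
      (hasDerivAt_stdCdf (zf v)).comp v hz
    have hφ : HasDerivAt (fun v => stdPdf (zf v))
        ((-(zf v) * stdPdf (zf v)) * (1 / (σ * (v - b)))) v := by
      simpa [Function.comp_def] using (hasDerivAt_stdPdf (zf v)).comp v hz
    have hφne : stdPdf (zf v) ≠ 0 := (stdPdf_pos _).ne'
    have hQ : HasDerivAt (fun v => stdCdf (zf v) / stdPdf (zf v))
        ((stdPdf (zf v) * (1 / (σ * (v - b))) * stdPdf (zf v) -
          stdCdf (zf v) * ((-(zf v) * stdPdf (zf v)) * (1 / (σ * (v - b))))) /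
          stdPdf (zf v) ^ 2) v := hΦ.div hφ hφne
    have hlin : HasDerivAt (fun v : ℝ => σ * (v - b)) σ v := by
      simpa using ((hasDerivAt_id v).sub_const b).const_mul σ
    have hG : HasDerivAt G _ v := (hasDerivAt_id v).add (hlin.mul hQ)
    refine hG.congr_deriv ?_
    have hσne : σ ≠ 0 := hσ.ne'
    have hvbne : v - b ≠ 0 := hvb.ne'
    field_simp
    ring
  have hmono : StrictMonoOn G (Ioi b) := by
    refine strictMonoOn_of_hasDerivWithinAt_pos (convex_Ioi b)
      (f' := fun v => 2 + (σ + zf v) * (stdCdf (zf v) / stdPdf (zf v))) ?_ ?_ ?_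
    · intro x hx
      exact (hderiv x hx).continuousAt.continuousWithinAt
    · intro x hx
      rw [interior_Ioi] at hx
      exact (hderiv x hx).hasDerivWithinAt
    · intro x hx
      rw [interior_Ioi] at hx
      exact deriv_pos_aux hσ
  intro x hx y hy hxy
  rw [cval_eq hσ ha hx, cval_eq hσ ha hy]
  exact hmono hx hy hxy
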